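/- Let H be a torsion-free group that is δ-hyperbolic with respect to a finite generating set S, and let g, h ∈ H satisfy ‖g‖ > 15δ, ‖h‖ > 15δ and ‖gh‖ > 5δ. Then the distance between the axes 𝒜_g and 𝒜_h is at most max{15δ, (‖gh‖ − ‖g‖ − ‖h‖)/2 + 18δ}. -/

import Mathlib

variable {G : Type*} [Group G]

/-- Word length of `g` with respect to a generating set `S`: the least number of
letters from `S ∪ S⁻¹` whose product is `g`. -/
noncomputable def wlen (S : Set G) (g : G) : ℕ :=
  sInf {n : ℕ | ∃ L : List G, (∀ x ∈ L, x ∈ S ∨ x⁻¹ ∈ S) ∧ L.length = n ∧ L.prod = g}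

/-- `f` parametrizes a geodesic segment from `a` to `b` (by arc length on
`[0, dist a b]`). -/
def IsGeodSeg {X : Type*} [MetricSpace X] (f : ℝ → X) (a b : X) : Prop :=
  f 0 = a ∧ f (dist a b) = b ∧
    ∀ s ∈ Set.Icc (0 : ℝ) (dist a b), ∀ t ∈ Set.Icc (0 : ℝ) (dist a b),
      dist (f s) (f t) = |s - t|

/-- A geodesic metric space: any two points are joined by a geodesic. -/
def GeodesicSpace (X : Type*) [MetricSpace X] : Prop :=
  ∀ a b : X, ∃ f : ℝ → X, IsGeodSeg f a b

/-- All geodesic triangles of `X` are `δ`-thin: for any two geodesic sides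
issuing from a common vertex `a`, the points at equal parameter
`t ≤ (d(a,b) + d(a,c) - d(b,c))/2` on the two sides are at distance `≤ δ`. -/
def SlimTriangles (X : Type*) [MetricSpace X] (δ : ℝ) : Prop :=
  ∀ (a b c : X) (f g : ℝ → X), IsGeodSeg f a b → IsGeodSeg g a c →
    ∀ t : ℝ, 0 ≤ t → t ≤ (dist a b + dist a c - dist b c) / 2 →
      dist (f t) (g t) ≤ δ

/-- The Cayley graph `Γ(G,S)`, axiomatized: a metric space `X` with an isometric
`G`-action, together with an equivariant embedding `ι : G → X` of the vertex set
realizing the word metric, whose image is `1`-dense (each point of `Γ(G,S)` lies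
on an edge, within distance `1` of a vertex). -/
structure CayleyModel (S : Set G) (X : Type*) [MetricSpace X] [MulAction G X]
    (ι : G → X) : Prop where
  isom : ∀ (h : G) (p q : X), dist (h • p) (h • q) = dist p q
  vertex_dist : ∀ a b : G, dist (ι a) (ι b) = (wlen S (a⁻¹ * b) : ℝ)
  equivariant : ∀ a b : G, ι (a * b) = a • ι b
  dense : ∀ p : X, ∃ a : G, dist p (ι a) ≤ 1

/-- The norm of `g`: `‖g‖ = inf { d(p, g • p) : p ∈ Γ(G,S) }`. -/
noncomputable def xnorm (X : Type*) [MetricSpace X] [MulAction G X] (g : G) : ℝ :=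
  sInf (Set.range fun p : X => dist p (g • p))

/-- The axis of `g`: the set of points of `Γ(G,S)` where `d(p, g • p)` attains
the norm `‖g‖`. -/
def axisOf (X : Type*) [MetricSpace X] [MulAction G X] (g : G) : Set X :=
  {p : X | dist p (g • p) = xnorm X g}

/-! A lower bound `D` on the distance between the axes of `g` and `h` forces the broken geodesic
`q, p, g p, g q, gh q, gh p, …`, built from near-closest points `p ∈ 𝒜_g`, `q ∈ 𝒜_h` and their
`gh`-translates, to turn by Gromov products at most about `δ` at every corner: a geodesic
`[p, g p]` lies in `𝒜_g`, hence stays `D`-far from `q`, and thinness of the triangle `p, q, g p`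
bounds `(q | g p)_p`. A broken geodesic with long segments and small turns is nearly straight, so
`(gh)ᴺ` moves `q` by at least `N (2D + ‖g‖ + ‖h‖ - 16δ)`, whence `2D + ‖g‖ + ‖h‖ - 16δ ≤ ‖gh‖`.
-/

section Metric

variable {X : Type*} [MetricSpace X]

noncomputable def gromovProduct (w x y : X) : ℝ :=
  (dist w x + dist w y - dist x y) / 2

theorem gromovProduct_nonneg (w x y : X) : 0 ≤ gromovProduct w x y := by
  have := dist_triangle_left x y w
  unfold gromovProduct; linarith

theorem gromovProduct_le_dist_left (w x y : X) : gromovProduct w x y ≤ dist w x := by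
  have := dist_triangle w x y
  unfold gromovProduct; linarith

theorem gromovProduct_comm (w x y : X) : gromovProduct w x y = gromovProduct w y x := by
  unfold gromovProduct; rw [dist_comm x y]; ring

theorem gromovProduct_le_dist_right (w x y : X) : gromovProduct w x y ≤ dist w y :=
  gromovProduct_comm w x y ▸ gromovProduct_le_dist_left w y x

theorem gromovProduct_add_gromovProduct (a b c : X) :
    gromovProduct a b c + gromovProduct b a c = dist a b := by
  unfold gromovProduct; rw [dist_comm b a]; ring

theorem IsGeodSeg.dist_left_apply {f : ℝ → X} {a b : X} (hf : IsGeodSeg f a b) {t : ℝ}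
    (ht : t ∈ Set.Icc 0 (dist a b)) : dist a (f t) = t := by
  rw [← hf.1, hf.2.2 0 ⟨le_rfl, dist_nonneg⟩ t ht, zero_sub, abs_neg, abs_of_nonneg ht.1]

theorem IsGeodSeg.dist_apply_right {f : ℝ → X} {a b : X} (hf : IsGeodSeg f a b) {t : ℝ}
    (ht : t ∈ Set.Icc 0 (dist a b)) : dist (f t) b = dist a b - t := by
  conv_lhs => rw [← hf.2.1]
  rw [hf.2.2 t ht _ ⟨dist_nonneg, le_rfl⟩, abs_sub_comm, abs_of_nonneg (sub_nonneg.2 ht.2)]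

def GromovFourPoint (X : Type*) [MetricSpace X] (δ : ℝ) : Prop :=
  ∀ w a b c : X, min (gromovProduct w a b) (gromovProduct w b c) - δ ≤ gromovProduct w a c

theorem SlimTriangles.gromovFourPoint {δ : ℝ} (hslim : SlimTriangles X δ)
    (hgeo : GeodesicSpace X) : GromovFourPoint X δ := by
  intro w a b c
  obtain ⟨f, hf⟩ := hgeo w a
  obtain ⟨k, hk⟩ := hgeo w b
  obtain ⟨l, hl⟩ := hgeo w c
  set t := min (gromovProduct w a b) (gromovProduct w b c)
  have ht0 : 0 ≤ t := le_min (gromovProduct_nonneg _ _ _) (gromovProduct_nonneg _ _ _)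
  have hfk : dist (f t) (k t) ≤ δ := hslim w a b f k hf hk t ht0 (min_le_left _ _)
  have hkl : dist (k t) (l t) ≤ δ := hslim w b c k l hk hl t ht0 (min_le_right _ _)
  have hfa : dist (f t) a = dist w a - t :=
    hf.dist_apply_right ⟨ht0, (min_le_left _ _).trans (gromovProduct_le_dist_left w a b)⟩
  have hlc : dist (l t) c = dist w c - t :=
    hl.dist_apply_right ⟨ht0, (min_le_right _ _).trans (gromovProduct_le_dist_right w b c)⟩
  have hac : dist a c ≤ dist (f t) a + dist (f t) (k t) + dist (k t) (l t) + dist (l t) c := by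
    linarith [dist_triangle4 a (f t) (k t) (l t), dist_triangle a (l t) c, dist_comm a (f t)]
  unfold gromovProduct; linarith

/-- The point of `[c, o]` at distance `(o | w)_c` from `c` is `δ`-close to a point of `e`, hence
`(D - δ)`-far from `o`. -/
theorem SlimTriangles.gromovProduct_le_of_le_dist {δ D : ℝ} (hslim : SlimTriangles X δ)
    (hgeo : GeodesicSpace X) {c o w : X} {e : ℝ → X} (he : IsGeodSeg e c w)
    (hD : ∀ t ∈ Set.Icc 0 (dist c w), D ≤ dist (e t) o) :
    gromovProduct c o w ≤ δ + (dist c o - D) := by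
  obtain ⟨f, hf⟩ := hgeo c o
  set t := gromovProduct c o w
  have ht0 : 0 ≤ t := gromovProduct_nonneg c o w
  have hfe : dist (f t) (e t) ≤ δ := hslim c o w f e hf he t ht0 le_rfl
  have hfo : dist (f t) o = dist c o - t :=
    hf.dist_apply_right ⟨ht0, gromovProduct_le_dist_left c o w⟩
  have heo := hD t ⟨ht0, gromovProduct_le_dist_right c o w⟩
  linarith [dist_triangle (e t) (f t) o, dist_comm (e t) (f t)]

namespace GromovFourPoint

variable {δ K L : ℝ} {x : ℕ → X}

/-- Since `(x₀ | xₙ₊₂)_{xₙ₊₁}` is small, `(xₙ₊₁ | x₀)_{xₙ₊₂}` is at least `L - K - δ > K + δ`,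
and the four-point condition at `xₙ₊₂` forces `(x₀ | xₙ₊₃)_{xₙ₊₂}` to be small as well. -/
theorem gromovProduct_chain_le (hX : GromovFourPoint X δ) (hδ : 0 ≤ δ) (hKL : 2 * K + 4 * δ < L)
    (hlen : ∀ i, L ≤ dist (x i) (x (i + 1)))
    (hturn : ∀ i, gromovProduct (x (i + 1)) (x i) (x (i + 2)) ≤ K) (n : ℕ) :
    gromovProduct (x (n + 1)) (x 0) (x (n + 2)) ≤ K + δ := by
  induction n with
  | zero => linarith [hturn 0]
  | succ n ih =>
    have hback : L - (K + δ) ≤ gromovProduct (x (n + 2)) (x (n + 1)) (x 0) := by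
      have := gromovProduct_add_gromovProduct (x (n + 2)) (x (n + 1)) (x 0)
      rw [gromovProduct_comm] at ih
      linarith [hlen (n + 1), dist_comm (x (n + 1)) (x (n + 2))]
    by_contra! hfar
    have hmin : K + δ < min (gromovProduct (x (n + 2)) (x (n + 1)) (x 0))
        (gromovProduct (x (n + 2)) (x 0) (x (n + 3))) := lt_min (by linarith) hfar
    linarith [hX (x (n + 2)) (x (n + 1)) (x 0) (x (n + 3)), hturn (n + 1)]

theorem sum_dist_sub_le_dist (hX : GromovFourPoint X δ) (hδ : 0 ≤ δ) (hKL : 2 * K + 4 * δ < L)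
    (hlen : ∀ i, L ≤ dist (x i) (x (i + 1)))
    (hturn : ∀ i, gromovProduct (x (i + 1)) (x i) (x (i + 2)) ≤ K) (n : ℕ) :
    ∑ i ∈ Finset.range (n + 1), dist (x i) (x (i + 1)) - 2 * n * (K + δ) ≤
      dist (x 0) (x (n + 1)) := by
  induction n with
  | zero => simp
  | succ n ih =>
    have hturn₀ := hX.gromovProduct_chain_le hδ hKL hlen hturn n
    rw [Finset.sum_range_succ]
    unfold gromovProduct at hturn₀
    push_cast
    linarith [dist_comm (x (n + 1)) (x 0)]

end GromovFourPoint

end Metric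

section Action

def quadPath {X : Type*} [MulAction G X] (k : G) (a b c d : X) : ℕ → X
  | 0 => a
  | 1 => b
  | 2 => c
  | 3 => d
  | i + 4 => k • quadPath k a b c d i

theorem quadPath_four_mul_add {X : Type*} [MulAction G X] (k : G) (a b c d : X) (m i : ℕ) :
    quadPath k a b c d (4 * m + i) = k ^ m • quadPath k a b c d i := by
  induction m with
  | zero => simp
  | succ m ih =>
    rw [show 4 * (m + 1) + i = 4 * m + i + 4 by ring, quadPath, ih, ← mul_smul, ← pow_succ']

theorem quadPath_add {X : Type*} [MulAction G X] (k : G) (a b c d : X) (i j : ℕ) :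
    quadPath k a b c d (i + j) = k ^ (i / 4) • quadPath k a b c d (i % 4 + j) := by
  rw [← quadPath_four_mul_add, ← add_assoc, Nat.div_add_mod]

variable {X : Type*} [MetricSpace X] [MulAction G X]

theorem xnorm_le_dist (k : G) (p : X) : xnorm X k ≤ dist p (k • p) :=
  csInf_le ⟨0, by rintro _ ⟨q, rfl⟩; exact dist_nonneg⟩ ⟨p, rfl⟩

variable [IsIsometricSMul G X]

theorem gromovProduct_smul (k : G) (w x y : X) :
    gromovProduct (k • w) (k • x) (k • y) = gromovProduct w x y := by
  simp only [gromovProduct, dist_smul]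

theorem dist_inv_smul_self (k : G) (p : X) : dist p (k⁻¹ • p) = dist p (k • p) := by
  rw [← dist_smul k, smul_inv_smul, dist_comm]

theorem xnorm_inv (k : G) : xnorm X k⁻¹ = xnorm X k := by
  simp only [xnorm, dist_inv_smul_self]

theorem axisOf_inv (k : G) : axisOf X k⁻¹ = axisOf X k := by
  ext p
  simp only [axisOf, Set.mem_ofPred_eq, dist_inv_smul_self, xnorm_inv]

theorem IsGeodSeg.mem_axisOf {k : G} {z : X} (hz : z ∈ axisOf X k) {e : ℝ → X}
    (he : IsGeodSeg e z (k • z)) {t : ℝ} (ht : t ∈ Set.Icc 0 (dist z (k • z))) :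
    e t ∈ axisOf X k := by
  refine le_antisymm ?_ (xnorm_le_dist k (e t))
  have hmove : dist (k • z) (k • e t) = t := by rw [dist_smul, he.dist_left_apply ht]
  have : dist z (k • z) = xnorm X k := hz
  linarith [dist_triangle (e t) (k • z) (k • e t), he.dist_apply_right ht]

theorem dist_pow_smul_le (k : G) (y : X) (n : ℕ) : dist y (k ^ n • y) ≤ n * dist y (k • y) := by
  induction n with
  | zero => simp
  | succ n ih =>
    have hstep : dist (k • y) (k ^ (n + 1) • y) = dist y (k ^ n • y) := by
      rw [pow_succ', mul_smul, dist_smul]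
    push_cast
    linarith [dist_triangle y (k • y) (k ^ (n + 1) • y)]

theorem le_xnorm_of_forall_nat_mul_le_dist {k : G} {q : X} {c : ℝ}
    (h : ∀ N : ℕ, N * c ≤ dist q (k ^ N • q)) : c ≤ xnorm X k := by
  refine le_csInf ⟨_, q, rfl⟩ ?_
  rintro _ ⟨y, rfl⟩
  have hN : ∀ N : ℕ, N * (c - dist y (k • y)) ≤ 2 * dist q y := fun N => by
    have := dist_triangle4 q y (k ^ N • y) (k ^ N • q)
    rw [dist_smul, dist_comm y q] at this
    linarith [h N, dist_pow_smul_le k y N]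
  by_contra! hc
  obtain ⟨N, hN'⟩ := exists_nat_gt (2 * dist q y / (c - dist y (k • y)))
  rw [div_lt_iff₀ (sub_pos.2 hc)] at hN'
  linarith [hN N]

section QuadPath

variable (k : G) (a b c d : X)

theorem dist_quadPath_succ (i : ℕ) :
    dist (quadPath k a b c d i) (quadPath k a b c d (i + 1)) =
      dist (quadPath k a b c d (i % 4)) (quadPath k a b c d (i % 4 + 1)) := by
  have h₀ := quadPath_add k a b c d i 0
  rw [add_zero, add_zero] at h₀
  rw [h₀, quadPath_add, dist_smul]

theorem gromovProduct_quadPath (i : ℕ) :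
    gromovProduct (quadPath k a b c d (i + 1)) (quadPath k a b c d i)
        (quadPath k a b c d (i + 2)) =
      gromovProduct (quadPath k a b c d (i % 4 + 1)) (quadPath k a b c d (i % 4))
        (quadPath k a b c d (i % 4 + 2)) := by
  have h₀ := quadPath_add k a b c d i 0
  rw [add_zero, add_zero] at h₀
  rw [h₀, quadPath_add, quadPath_add k a b c d i 2, gromovProduct_smul]

theorem sum_range_four_mul_dist_quadPath (N : ℕ) :
    ∑ i ∈ Finset.range (4 * N), dist (quadPath k a b c d i) (quadPath k a b c d (i + 1)) =
      N * ∑ i ∈ Finset.range 4, dist (quadPath k a b c d i) (quadPath k a b c d (i + 1)) := by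
  induction N with
  | zero => simp
  | succ N ih =>
    simp only [Nat.mul_succ, Finset.sum_range_add, ih, add_assoc, quadPath_four_mul_add,
      dist_smul]
    push_cast
    ring

variable {k a b c d}

/-- `kᴺ • a` is the `4N`-th vertex of the nearly straight broken geodesic `quadPath k a b c d`. -/
theorem GromovFourPoint.le_xnorm_of_quadPath {δ K L : ℝ} (hX : GromovFourPoint X δ)
    (hδ : 0 ≤ δ) (hKL : 2 * K + 4 * δ < L)
    (hlen : ∀ i < 4, L ≤ dist (quadPath k a b c d i) (quadPath k a b c d (i + 1)))
    (hturn : ∀ i < 4, gromovProduct (quadPath k a b c d (i + 1)) (quadPath k a b c d i)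
      (quadPath k a b c d (i + 2)) ≤ K) :
    ∑ i ∈ Finset.range 4, dist (quadPath k a b c d i) (quadPath k a b c d (i + 1)) -
      8 * (K + δ) ≤ xnorm X k := by
  refine le_xnorm_of_forall_nat_mul_le_dist (q := a) fun N => ?_
  rcases N with _ | N
  · simp
  have hK : 0 ≤ K := (gromovProduct_nonneg _ _ _).trans (hturn 0 (by norm_num))
  have hchain := hX.sum_dist_sub_le_dist hδ hKL
    (fun i => dist_quadPath_succ k a b c d i ▸ hlen _ (Nat.mod_lt i (by norm_num)))
    (fun i => gromovProduct_quadPath k a b c d i ▸ hturn _ (Nat.mod_lt i (by norm_num)))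
    (4 * N + 3)
  rw [show 4 * N + 3 + 1 = 4 * (N + 1) by ring, sum_range_four_mul_dist_quadPath,
    ← add_zero (4 * (N + 1)), quadPath_four_mul_add] at hchain
  refine le_trans ?_ hchain
  push_cast
  linarith

end QuadPath

theorem le_xnorm_mul_of_gromovProduct_le {δ K : ℝ} (hX : GromovFourPoint X δ) (hδ : 0 ≤ δ)
    {g h : G} {p q : X}
    (hgp : gromovProduct p q (g • p) ≤ K) (hgp' : gromovProduct p q (g⁻¹ • p) ≤ K)
    (hhq : gromovProduct q p (h • q) ≤ K) (hhq' : gromovProduct q p (h⁻¹ • q) ≤ K)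
    (hKL : 2 * K + 4 * δ < min (dist p q) (min (dist p (g • p)) (dist q (h • q)))) :
    2 * dist p q + dist p (g • p) + dist q (h • q) - 8 * (K + δ) ≤ xnorm X (g * h) := by
  set x := quadPath (g * h) q p (g • p) (g • q)
  have hd₀ : dist (x 0) (x 1) = dist p q := dist_comm q p
  have hd₁ : dist (x 1) (x 2) = dist p (g • p) := rfl
  have hd₂ : dist (x 2) (x 3) = dist p q := dist_smul g p q
  have hd₃ : dist (x 3) (x 4) = dist q (h • q) := by
    show dist (g • q) ((g * h) • q) = _
    rw [mul_smul, dist_smul]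
  have ht₁ : gromovProduct (x 2) (x 1) (x 3) ≤ K := by
    show gromovProduct (g • p) p (g • q) ≤ K
    rwa [← smul_inv_smul g p, gromovProduct_smul, smul_inv_smul, gromovProduct_comm]
  have ht₂ : gromovProduct (x 3) (x 2) (x 4) ≤ K := by
    show gromovProduct (g • q) (g • p) ((g * h) • q) ≤ K
    rwa [mul_smul, gromovProduct_smul]
  have ht₃ : gromovProduct (x 4) (x 3) (x 5) ≤ K := by
    show gromovProduct ((g * h) • q) (g • q) ((g * h) • p) ≤ K
    rwa [show g • q = (g * h) • h⁻¹ • q by rw [mul_smul, smul_inv_smul], gromovProduct_smul,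
      gromovProduct_comm]
  have := hX.le_xnorm_of_quadPath hδ hKL
    (fun i hi => by
      interval_cases i
      · rw [hd₀]; exact min_le_left _ _
      · rw [hd₁]; exact (min_le_right _ _).trans (min_le_left _ _)
      · rw [hd₂]; exact min_le_left _ _
      · rw [hd₃]; exact (min_le_right _ _).trans (min_le_right _ _))
    (fun i hi => by interval_cases i; exacts [hgp, ht₁, ht₂, ht₃])
  simp only [Finset.sum_range_succ, Finset.sum_range_zero, zero_add, Nat.reduceAdd] at this
  linarith

theorem gromovProduct_smul_le_of_mem_axisOf {δ D : ℝ} (hslim : SlimTriangles X δ)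
    (hgeo : GeodesicSpace X) {g : G} {p q : X} (hp : p ∈ axisOf X g)
    (hD : ∀ u ∈ axisOf X g, D ≤ dist u q) :
    gromovProduct p q (g • p) ≤ δ + (dist p q - D) := by
  obtain ⟨e, he⟩ := hgeo p (g • p)
  exact hslim.gromovProduct_le_of_le_dist hgeo he fun t ht => hD _ (he.mem_axisOf hp ht)

theorem gromovProduct_inv_smul_le_of_mem_axisOf {δ D : ℝ} (hslim : SlimTriangles X δ)
    (hgeo : GeodesicSpace X) {g : G} {p q : X} (hp : p ∈ axisOf X g)
    (hD : ∀ u ∈ axisOf X g, D ≤ dist u q) :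
    gromovProduct p q (g⁻¹ • p) ≤ δ + (dist p q - D) :=
  gromovProduct_smul_le_of_mem_axisOf hslim hgeo (by rwa [axisOf_inv]) (by rwa [axisOf_inv])

theorem two_mul_add_xnorm_sub_le_xnorm_mul {δ D : ℝ} (hslim : SlimTriangles X δ)
    (hgeo : GeodesicSpace X) (hδ : 0 ≤ δ) {g h : G}
    (hD : IsGLB {d : ℝ | ∃ p ∈ axisOf X g, ∃ q ∈ axisOf X h, d = dist p q} D)
    (hDδ : 6 * δ < D) (hgδ : 6 * δ < xnorm X g) (hhδ : 6 * δ < xnorm X h) :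
    2 * D + xnorm X g + xnorm X h - 16 * δ ≤ xnorm X (g * h) := by
  refine le_of_forall_pos_le_add fun ε hε => ?_
  set m := min D (min (xnorm X g) (xnorm X h))
  have hm : 6 * δ < m := lt_min hDδ (lt_min hgδ hhδ)
  set η := min (ε / 6) ((m - 6 * δ) / 2)
  have hη : 0 < η := lt_min (by linarith) (by linarith)
  obtain ⟨_, ⟨p, hp, q, hq, rfl⟩, hDpq, hpq⟩ := hD.exists_between (lt_add_of_pos_right D hη)
  have hgq : ∀ u ∈ axisOf X g, D ≤ dist u q := fun u hu => hD.1 ⟨u, hu, q, hq, rfl⟩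
  have hhp : ∀ v ∈ axisOf X h, D ≤ dist v p := fun v hv => dist_comm p v ▸ hD.1 ⟨p, hp, v, hv, rfl⟩
  have hpg : dist p (g • p) = xnorm X g := hp
  have hqh : dist q (h • q) = xnorm X h := hq
  have hmD : m ≤ D := min_le_left _ _
  have hmg : m ≤ xnorm X g := (min_le_right _ _).trans (min_le_left _ _)
  have hmh : m ≤ xnorm X h := (min_le_right _ _).trans (min_le_right _ _)
  have hηε : η ≤ ε / 6 := min_le_left _ _
  have hηm : η ≤ (m - 6 * δ) / 2 := min_le_right _ _
  have := le_xnorm_mul_of_gromovProduct_le (hslim.gromovFourPoint hgeo) hδ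
    (gromovProduct_smul_le_of_mem_axisOf hslim hgeo hp hgq)
    (gromovProduct_inv_smul_le_of_mem_axisOf hslim hgeo hp hgq)
    (dist_comm q p ▸ gromovProduct_smul_le_of_mem_axisOf hslim hgeo hq hhp)
    (dist_comm q p ▸ gromovProduct_inv_smul_le_of_mem_axisOf hslim hgeo hq hhp)
    (by rw [hpg, hqh]; exact lt_min (by linarith) (lt_min (by linarith) (by linarith)))
  rw [hpg, hqh] at this
  linarith

end Action

theorem stmt19_general (H : Type) [Group H] (S : Set H) (δ : ℝ)
    (X : Type) [MetricSpace X] [MulAction H X] (ι : H → X)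
    (hδ : 0 ≤ δ)
    (hcay : CayleyModel S X ι) (hgeo : GeodesicSpace X) (hslim : SlimTriangles X δ)
    (g h : H) (hg : xnorm X g > 15 * δ) (hh : xnorm X h > 15 * δ) :
    sInf {d : ℝ | ∃ p ∈ axisOf X g, ∃ q ∈ axisOf X h, d = dist p q} ≤
      max (15 * δ) ((xnorm X (g * h) - xnorm X g - xnorm X h) / 2 + 18 * δ) := by
  have : IsIsometricSMul H X := ⟨fun k => Isometry.of_dist_eq (hcay.isom k)⟩
  set T := {d : ℝ | ∃ p ∈ axisOf X g, ∃ q ∈ axisOf X h, d = dist p q}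
  rcases T.eq_empty_or_nonempty with hT | hT
  · rw [hT, Real.sInf_empty]
    exact le_max_of_le_left (by linarith)
  have hglb : IsGLB T (sInf T) :=
    isGLB_csInf hT ⟨0, by rintro _ ⟨p, -, q, -, rfl⟩; exact dist_nonneg⟩
  rcases le_or_gt (sInf T) (15 * δ) with hD | hD
  · exact le_max_of_le_left hD
  have := two_mul_add_xnorm_sub_le_xnorm_mul hslim hgeo hδ hglb
    (by linarith) (by linarith) (by linarith)
  exact le_max_of_le_right (by linarith)

/-- (Proposition 2.30 of the paper.)  If `‖g‖ > 15δ`, `‖h‖ > 15δ`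
and `‖gh‖ > 5δ`, then the distance between the axes `𝒜_g` and `𝒜_h` (the infimum
of distances between their points) is at most
`max { 15δ, (‖gh‖ - ‖g‖ - ‖h‖)/2 + 18δ }`. -/
theorem stmt19 (H : Type) [Group H] (S : Set H) (δ : ℝ)
    (X : Type) [MetricSpace X] [MulAction H X] (ι : H → X)
    (hfin : S.Finite) (hgen : Subgroup.closure S = ⊤) (hδ : 0 ≤ δ)
    (htf : ∀ g : H, g ≠ 1 → ¬IsOfFinOrder g)
    (hcay : CayleyModel S X ι) (hgeo : GeodesicSpace X) (hslim : SlimTriangles X δ)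
    (g h : H) (hg : xnorm X g > 15 * δ) (hh : xnorm X h > 15 * δ)
    (hgh : xnorm X (g * h) > 5 * δ) :
    sInf {d : ℝ | ∃ p ∈ axisOf X g, ∃ q ∈ axisOf X h, d = dist p q} ≤
      max (15 * δ) ((xnorm X (g * h) - xnorm X g - xnorm X h) / 2 + 18 * δ) :=
  stmt19_general H S δ X ι hδ hcay hgeo hslim g h hg hh
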